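/- Let n be an integer with 0 ≤ n ≤ N_{K,L} and let N_coh be a positive real satisfying Δ^{(K)}_n ≤ N_coh/K < Δ^{(K)}_{n+1} (with the conventions Δ^{(K)}_0 = 0 and Δ^{(K)}_{N_{K,L}+1} = +∞). Then the vector p'_opt(2n+K, K) (the closed-form maximizer of C_sum over Ω(2n+K, K) from Theorem 3) maximizes the net rate over all valid pilot assignment vectors: C_net(p, N_coh) ≤ C_net(p'_opt(2n+K, K), N_coh) for every p ∈ P_{L,K}; in particular the optimal pilot length equals 2n+K (Theorem 4). -/

import Mathlib

/-- A pilot assignment vector `p = (p_0, …, p_{m-1})` for `K` users per cell is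
valid if `0 ≤ p_i ≤ K·3^i` for every `i` and `Σ_i p_i · 3^{-i} = K`. -/
def validPK {m : ℕ} (K : ℕ) (p : Fin m → ℤ) : Prop :=
  (∀ i, 0 ≤ p i ∧ p i ≤ (K : ℤ) * 3 ^ (i : ℕ)) ∧
  (∑ i, (p i : ℝ) / 3 ^ (i : ℕ)) = (K : ℝ)

/-- The pilot length `N_pil(p) = Σ_i p_i`. -/
def Npil {m : ℕ} (p : Fin m → ℤ) : ℤ := ∑ i, p i

/-- The per-cell sum rate `C_sum(p) = Σ_i 3^{-i}·p_i·C_i` with `C_i = C_0 + i·d`. -/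
noncomputable def Csum {m : ℕ} (C0 d : ℝ) (p : Fin m → ℤ) : ℝ :=
  ∑ i, (p i : ℝ) / 3 ^ (i : ℕ) * (C0 + (i : ℕ) * d)

/-- `χ(N, K) = min{k ∈ ℕ : Σ_{i=0}^{k} K·3^i > (N - K)/2}`. -/
noncomputable def chiK (N K : ℤ) : ℕ :=
  sInf {k : ℕ | (N - K) / 2 < ∑ i ∈ Finset.range (k + 1), K * (3 : ℤ) ^ i}

/-- The closed-form optimal pilot assignment vector of Theorem 3:
`p'_i = Σ_{s=0}^{i} K·3^s - (N-K)/2` if `i = χ(N,K)`,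
`p'_i = 3·((N-K)/2 - Σ_{s=0}^{i-2} K·3^s)` if `i = χ(N,K) + 1 ≤ m-1`,
and `p'_i = 0` otherwise. -/
noncomputable def poptK (m : ℕ) (K N : ℤ) : Fin m → ℤ := fun i =>
  if (i : ℕ) = chiK N K then (∑ s ∈ Finset.range (chiK N K + 1), K * 3 ^ s) - (N - K) / 2
  else if (i : ℕ) = chiK N K + 1 then
    3 * ((N - K) / 2 - ∑ s ∈ Finset.range (chiK N K), K * 3 ^ s)
  else 0

/-- The net rate `C_net(p, N_coh) = (1 - N_pil(p)/N_coh)·C_sum(p)`. -/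
noncomputable def Cnet {m : ℕ} (C0 d : ℝ) (p : Fin m → ℤ) (Ncoh : ℝ) : ℝ :=
  (1 - (Npil p : ℝ) / Ncoh) * Csum C0 d p

/-- The intersection point
`Δ^{(K)}_n = [2·(2n - 1 - Σ_{i=0}^{η-1} K·3^i + K·ξ(n,K)) + K]/K`, where
`η = η(n,K) = χ(2n+K-2, K)` and `ξ(n,K) = 3^η·C_η/d` with `C_i = C_0 + i·d`. -/
noncomputable def DeltaK (C0 d : ℝ) (K : ℕ) (n : ℕ) : ℝ :=
  (2 * ((2 * (n : ℝ) - 1)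
      - (∑ i ∈ Finset.range (chiK (2 * (n : ℤ) + (K : ℤ) - 2) K), (K : ℝ) * 3 ^ i)
      + (K : ℝ) * (3 ^ chiK (2 * (n : ℤ) + (K : ℤ) - 2) K *
          (C0 + (chiK (2 * (n : ℤ) + (K : ℤ) - 2) K : ℝ) * d) / d))
    + (K : ℝ)) / (K : ℝ)

/-!
For every depth `k`, the point `(3^{-i}, i·3^{-i})` lies below the line through the points of
depths `k` and `k + 1`. Hence the sum rate of a valid vector of pilot length `N` is at most that of
a vector supported on depths `k, k + 1`, an affine function of `N`. The vector
`p'_opt(2j + K, K)` is supported on depths `χ(2j + K, K)` and `χ(2j + K, K) + 1`, so it attains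
this bound and has the largest net rate `ψ(j)` among valid vectors of pilot length
`2j + K ≤ N_coh`. A direct computation gives
`ψ(j + 1) - ψ(j) = d / (3^χ N_coh) · (N_coh - K Δ_{j+1})`, and `Δ` is nondecreasing, so `ψ`
increases up to `n` and decreases after it. Every valid pilot length is `≡ K (mod 2)` and lies in
`[K, K·3^{m-1}]`, and a vector longer than `N_coh` has net rate at most `ψ(0)` because
`C_sum ≥ K C_0`.
-/

open Finset

namespace PilotAssignment

def tierSum (K k : ℕ) : ℕ := ∑ i ∈ range k, K * 3 ^ i

variable {K : ℕ}

theorem tierSum_succ (K k : ℕ) : tierSum K (k + 1) = tierSum K k + K * 3 ^ k :=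
  sum_range_succ _ k

theorem two_mul_tierSum_add (K k : ℕ) : 2 * tierSum K k + K = K * 3 ^ k := by
  induction k with
  | zero => simp [tierSum]
  | succ k ih => rw [tierSum_succ, pow_succ]; linarith

theorem tierSum_eq_sub_div (K k : ℕ) : tierSum K k = (K * 3 ^ k - K) / 2 := by
  have := two_mul_tierSum_add K k
  omega

theorem tierSum_strictMono (hK : 0 < K) : StrictMono (tierSum K) :=
  strictMono_nat_of_lt_succ fun k => by rw [tierSum_succ]; simp [hK]

/-- `tier K n` is the depth `c` with `tierSum K c ≤ n < tierSum K (c + 1)`. -/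
noncomputable def tier (K n : ℕ) : ℕ := sInf {k | n < tierSum K (k + 1)}

theorem lt_tierSum_tier_succ (hK : 0 < K) (n : ℕ) : n < tierSum K (tier K n + 1) :=
  Nat.sInf_mem (s := {k | n < tierSum K (k + 1)})
    ⟨n, ((tierSum_strictMono hK).id_le n).trans_lt (tierSum_strictMono hK n.lt_succ_self)⟩

theorem tierSum_tier_le (n : ℕ) : tierSum K (tier K n) ≤ n := by
  cases h : tier K n with
  | zero => simp [tierSum]
  | succ k =>
    exact not_lt.1 <| Nat.notMem_of_lt_sInf (s := {k | n < tierSum K (k + 1)})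
      (show k < tier K n by omega)

theorem tier_le_of_lt_tierSum {n k : ℕ} (h : n < tierSum K (k + 1)) : tier K n ≤ k :=
  Nat.sInf_le h

theorem tier_eq_of_le_of_lt (hK : 0 < K) {n k : ℕ} (h₁ : tierSum K k ≤ n)
    (h₂ : n < tierSum K (k + 1)) : tier K n = k := by
  refine le_antisymm (tier_le_of_lt_tierSum h₂) (not_lt.1 fun hlt => ?_)
  have := (tierSum_strictMono hK).monotone (show tier K n + 1 ≤ k by omega)
  have := lt_tierSum_tier_succ hK n
  omega

theorem tier_mono (hK : 0 < K) : Monotone (tier K) := fun _ _ h =>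
  tier_le_of_lt_tierSum (h.trans_lt (lt_tierSum_tier_succ hK _))

theorem tier_succ (hK : 0 < K) (n : ℕ) :
    tier K (n + 1) = tier K n ∨
      tier K (n + 1) = tier K n + 1 ∧ n + 1 = tierSum K (tier K n + 1) := by
  have h₁ := tierSum_tier_le (K := K) n
  have h₂ := lt_tierSum_tier_succ hK n
  rcases (Nat.succ_le_of_lt h₂).lt_or_eq with h | h
  · exact .inl (tier_eq_of_le_of_lt hK (by omega) h)
  · have h₃ := tierSum_strictMono hK (Nat.lt_add_one (tier K n + 1))
    exact .inr ⟨tier_eq_of_le_of_lt hK h.ge (by omega), h⟩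

theorem chiK_two_mul_add (K n : ℕ) : chiK (2 * n + K) K = tier K n := by
  have hhalf : (2 * (n : ℤ) + K - K) / 2 = n := by simp
  simp only [chiK, tier, hhalf, tierSum]
  congr 1
  ext k
  exact_mod_cast Iff.rfl

theorem two_mul_three_pow_mul_le (k i : ℕ) :
    2 * (3 : ℝ) ^ k * i ≤ 3 ^ i + 3 ^ k * (2 * k - 1) := by
  rcases le_or_gt k i with h | h
  · obtain ⟨t, rfl⟩ := Nat.exists_eq_add_of_le h
    have hB : 1 + (t : ℝ) * 2 ≤ 3 ^ t := by
      have := one_add_mul_le_pow (show (-2 : ℝ) ≤ 2 by norm_num) t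
      norm_num at this
      exact this
    rw [pow_add]
    push_cast
    nlinarith [mul_le_mul_of_nonneg_left hB (pow_pos (show (0 : ℝ) < 3 by norm_num) k).le]
  · have : (i : ℝ) + 1 ≤ k := by exact_mod_cast h
    nlinarith [pow_pos (show (0 : ℝ) < 3 by norm_num) k, pow_pos (show (0 : ℝ) < 3 by norm_num) i]

theorem div_three_pow_le (k i : ℕ) :
    (i : ℝ) / 3 ^ i ≤ 1 / (2 * 3 ^ k) + (k - 1 / 2) / 3 ^ i := by
  rw [div_add_div _ _ (by positivity) (by positivity), div_le_div_iff₀ (by positivity) (by positivity)]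
  nlinarith [two_mul_three_pow_mul_le k i, pow_pos (show (0 : ℝ) < 3 by norm_num) i,
    pow_pos (show (0 : ℝ) < 3 by norm_num) k]

/-- The sum rate of a vector of pilot length `N` supported on depths `k` and `k + 1`. -/
noncomputable def twoDepthRate (C0 d : ℝ) (K k : ℕ) (N : ℝ) : ℝ :=
  K * C0 + d * (N / (2 * 3 ^ k) + (k - 1 / 2) * K)

section Valid

variable {m : ℕ} {p : Fin m → ℤ}

theorem cast_nonneg_of_validPK (hp : validPK K p) (i : Fin m) : (0 : ℝ) ≤ p i := by
  exact_mod_cast (hp.1 i).1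

theorem Csum_le_twoDepthRate {C0 d : ℝ} (hd : 0 ≤ d) (hp : validPK K p) (k : ℕ) :
    Csum C0 d p ≤ twoDepthRate C0 d K k (Npil p) := by
  calc Csum C0 d p
      ≤ ∑ i, (C0 * (p i / 3 ^ (i : ℕ)) + d * (k - 1 / 2) * (p i / 3 ^ (i : ℕ))
          + d / (2 * 3 ^ k) * p i) := by
        refine sum_le_sum fun i _ => ?_
        have := mul_le_mul_of_nonneg_left (div_three_pow_le k i)
          (mul_nonneg hd (cast_nonneg_of_validPK hp i))
        linear_combination this
    _ = twoDepthRate C0 d K k (Npil p) := by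
        simp only [sum_add_distrib, ← mul_sum, hp.2, Npil, twoDepthRate]
        push_cast
        ring

theorem mul_le_Csum {C0 d : ℝ} (hd : 0 ≤ d) (hp : validPK K p) : K * C0 ≤ Csum C0 d p := by
  calc (K : ℝ) * C0 = ∑ i, (p i : ℝ) / 3 ^ (i : ℕ) * C0 := by rw [← sum_mul, hp.2]
    _ ≤ Csum C0 d p := sum_le_sum fun i _ => by
        have := cast_nonneg_of_validPK hp i
        gcongr
        exact le_add_of_nonneg_right (by positivity)

theorem le_Npil (hp : validPK K p) : (K : ℤ) ≤ Npil p := by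
  have : (K : ℝ) ≤ Npil p := by
    rw [← hp.2, Npil]
    push_cast
    exact sum_le_sum fun i _ =>
      div_le_self (cast_nonneg_of_validPK hp i) (one_le_pow₀ (by norm_num))
  exact_mod_cast this

theorem sum_mul_three_pow_of_validPK (hm : 0 < m) (hp : validPK K p) :
    ∑ i, p i * 3 ^ (m - 1 - i) = K * 3 ^ (m - 1) := by
  have : ∑ i, (p i : ℝ) * 3 ^ (m - 1 - i) = K * 3 ^ (m - 1) := by
    rw [← hp.2, sum_mul]
    refine sum_congr rfl fun i _ => ?_
    rw [pow_sub₀ _ (by norm_num) (by omega)]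
    ring
  exact_mod_cast this

theorem exists_Npil_eq (hm : 0 < m) (hp : validPK K p) :
    ∃ j : ℕ, Npil p = 2 * j + K ∧ j ≤ tierSum K (m - 1) := by
  have hsum := sum_mul_three_pow_of_validPK hm hp
  have htop : 2 * (tierSum K (m - 1) : ℤ) + K = K * 3 ^ (m - 1) := by
    exact_mod_cast two_mul_tierSum_add K (m - 1)
  have hle : Npil p ≤ K * 3 ^ (m - 1) := hsum ▸ sum_le_sum fun i _ =>
    le_mul_of_one_le_right (hp.1 i).1 (one_le_pow₀ (by norm_num))
  have h3 (e : ℕ) : (3 : ℤ) ^ e ≡ 1 [ZMOD 2] := by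
    simpa using (show (3 : ℤ) ≡ 1 [ZMOD 2] by decide).pow e
  have hpar : Npil p ≡ K [ZMOD 2] :=
    calc Npil p ≡ ∑ i, p i * 3 ^ (m - 1 - i) [ZMOD 2] :=
          Int.ModEq.sum fun i _ => by simpa using ((h3 _).mul_left (p i)).symm
      _ = K * 3 ^ (m - 1) := hsum
      _ ≡ K [ZMOD 2] := by simpa using (h3 _).mul_left K
  obtain ⟨j, hj⟩ := hpar.symm.dvd
  have hK := le_Npil hp
  refine ⟨j.toNat, by omega, ?_⟩
  zify
  omega

end Valid

theorem sum_fin_eq_add {M : Type*} [AddCommMonoid M] {m c : ℕ} (f : ℕ → M) (hc : c < m)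
    (hf : ∀ i, i ≠ c → i ≠ c + 1 → f i = 0) (hlast : m ≤ c + 1 → f (c + 1) = 0) :
    ∑ i : Fin m, f i = f c + f (c + 1) := by
  rw [Fin.sum_univ_eq_sum_range f m]
  exact sum_eq_add c (c + 1) (by omega) (fun i _ h => hf i h.1 h.2)
    (fun h => absurd (mem_range.2 hc) h) (fun h => hlast (by simpa using h))

theorem poptK_apply (m K n : ℕ) (i : Fin m) :
    poptK m K (2 * n + K) i =
      if (i : ℕ) = tier K n then (tierSum K (tier K n + 1) : ℤ) - n
      else if (i : ℕ) = tier K n + 1 then 3 * ((n : ℤ) - tierSum K (tier K n))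
      else 0 := by
  have hhalf : (2 * (n : ℤ) + K - K) / 2 = n := by simp
  simp only [poptK, chiK_two_mul_add, hhalf, tierSum]
  push_cast
  rfl

theorem sum_poptK {M : Type*} [AddCommMonoid M] {m n : ℕ} (hK : 0 < K) (hm : 0 < m)
    (hn : n ≤ tierSum K (m - 1)) (F : ℕ → ℤ → M) (hF : ∀ i, F i 0 = 0) :
    ∑ i : Fin m, F i (poptK m K (2 * n + K) i) =
      F (tier K n) ((tierSum K (tier K n + 1) : ℤ) - n) +
        F (tier K n + 1) (3 * ((n : ℤ) - tierSum K (tier K n))) := by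
  have hc : tier K n ≤ m - 1 :=
    tier_le_of_lt_tierSum (hn.trans_lt (tierSum_strictMono hK (Nat.lt_add_one _)))
  simp only [poptK_apply]
  set c := tier K n
  set a : ℤ := tierSum K (c + 1) - n
  set b : ℤ := 3 * ((n : ℤ) - tierSum K c)
  rw [sum_fin_eq_add (c := c) (fun i => F i (if i = c then a else if i = c + 1 then b else 0))
    (by omega) (fun i h₁ h₂ => by simp [h₁, h₂, hF]) fun hlast => ?_]
  · simp
  have : n = tierSum K c := le_antisymm (hn.trans_eq (by congr 1; omega)) (tierSum_tier_le n)
  simp [b, ← this, hF]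

section Optimal

variable {m n : ℕ}

theorem Npil_poptK (hK : 0 < K) (hm : 0 < m) (hn : n ≤ tierSum K (m - 1)) :
    Npil (poptK m K (2 * n + K)) = 2 * n + K := by
  rw [Npil, sum_poptK hK hm hn (fun _ x => x) fun _ => rfl]
  have h₁ := tierSum_succ K (tier K n)
  have h₂ := two_mul_tierSum_add K (tier K n)
  push_cast [h₁, ← h₂]
  ring

theorem Csum_poptK (C0 d : ℝ) (hK : 0 < K) (hm : 0 < m) (hn : n ≤ tierSum K (m - 1)) :
    Csum C0 d (poptK m K (2 * n + K)) = twoDepthRate C0 d K (tier K n) (2 * n + K) := by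
  rw [Csum, sum_poptK hK hm hn (fun i x => (x : ℝ) / 3 ^ i * (C0 + i * d)) fun _ => by simp]
  have h₁ := tierSum_succ K (tier K n)
  have h₂ : 2 * (tierSum K (tier K n) : ℝ) + K = K * 3 ^ tier K n := by
    exact_mod_cast two_mul_tierSum_add K (tier K n)
  rw [twoDepthRate, h₁]
  push_cast
  field_simp
  linear_combination (-3 * d * 3 ^ tier K n) * h₂

end Optimal

noncomputable def optNetRate (C0 d Ncoh : ℝ) (K j : ℕ) : ℝ :=
  (1 - (2 * j + K) / Ncoh) * twoDepthRate C0 d K (tier K j) (2 * j + K)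

theorem Cnet_poptK {m n : ℕ} (C0 d Ncoh : ℝ) (hK : 0 < K) (hm : 0 < m)
    (hn : n ≤ tierSum K (m - 1)) :
    Cnet C0 d (poptK m K (2 * n + K)) Ncoh = optNetRate C0 d Ncoh K n := by
  rw [Cnet, Npil_poptK hK hm hn, Csum_poptK C0 d hK hm hn, optNetRate]
  push_cast
  rfl

section NetRate

variable {C0 d Ncoh : ℝ}

theorem twoDepthRate_succ_three_pow (C0 d : ℝ) (K k : ℕ) :
    twoDepthRate C0 d K (k + 1) (K * 3 ^ (k + 1)) = twoDepthRate C0 d K k (K * 3 ^ (k + 1)) := by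
  simp only [twoDepthRate]
  push_cast
  field_simp
  ring

theorem optNetRate_succ (hK : 0 < K) (j : ℕ) :
    optNetRate C0 d Ncoh K (j + 1) =
      (1 - (2 * j + K + 2) / Ncoh) * twoDepthRate C0 d K (tier K j) (2 * j + K + 2) := by
  have hN : 2 * ((j + 1 : ℕ) : ℝ) + K = 2 * j + K + 2 := by push_cast; ring
  rw [optNetRate, hN]
  rcases tier_succ hK j with h | ⟨h, hjump⟩
  · rw [h]
  · have h₂ : 2 * (j : ℝ) + K + 2 = K * 3 ^ (tier K j + 1) := by
      have := two_mul_tierSum_add K (tier K j + 1)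
      rw [← hjump] at this
      exact_mod_cast (by omega : 2 * j + K + 2 = K * 3 ^ (tier K j + 1))
    rw [h, h₂, twoDepthRate_succ_three_pow]

theorem mul_DeltaK_succ (hK : 0 < K) (j : ℕ) :
    K * DeltaK C0 d K (j + 1) =
      4 * j + 2 + 2 * K + K * 3 ^ tier K j * (2 * (C0 + tier K j * d) / d - 1) := by
  have hchi : 2 * ((j + 1 : ℕ) : ℤ) + K - 2 = 2 * j + K := by push_cast; ring
  have h₂ : 2 * (tierSum K (tier K j) : ℝ) + K = K * 3 ^ tier K j := by
    exact_mod_cast two_mul_tierSum_add K (tier K j)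
  rw [DeltaK, hchi, chiK_two_mul_add]
  have : (∑ i ∈ range (tier K j), (K : ℝ) * 3 ^ i) = tierSum K (tier K j) := by
    simp [tierSum]
  rw [this, mul_div_cancel₀ _ (by positivity)]
  push_cast
  linear_combination -h₂

theorem optNetRate_succ_sub (hd : d ≠ 0) (hNcoh : Ncoh ≠ 0) (hK : 0 < K) (j : ℕ) :
    optNetRate C0 d Ncoh K (j + 1) - optNetRate C0 d Ncoh K j =
      d / (3 ^ tier K j * Ncoh) * (Ncoh - K * DeltaK C0 d K (j + 1)) := by
  rw [optNetRate_succ hK, optNetRate, mul_DeltaK_succ hK, twoDepthRate, twoDepthRate]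
  field_simp
  ring

theorem monotone_three_pow_mul (hC0 : 0 ≤ C0) (hd : 0 < d) :
    Monotone fun c : ℕ => (3 : ℝ) ^ c * (2 * (C0 + c * d) / d - 1) :=
  monotone_nat_of_le_succ fun c => by
    have : 0 ≤ (3 : ℝ) ^ c * (4 * (C0 + c * d) / d + 4) := by positivity
    have e : (3 : ℝ) ^ (c + 1) * (2 * (C0 + (c + 1 : ℕ) * d) / d - 1) =
        (3 : ℝ) ^ c * (2 * (C0 + c * d) / d - 1) + (3 : ℝ) ^ c * (4 * (C0 + c * d) / d + 4) := by
      push_cast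
      field_simp
      ring
    simp only [e]
    linarith

theorem monotone_DeltaK_succ (hC0 : 0 ≤ C0) (hd : 0 < d) (hK : 0 < K) :
    Monotone fun j => DeltaK C0 d K (j + 1) := fun a b hab => by
  have hKpos : (0 : ℝ) < K := by exact_mod_cast hK
  have hab' : (a : ℝ) ≤ b := by exact_mod_cast hab
  have := mul_le_mul_of_nonneg_left (monotone_three_pow_mul hC0 hd (tier_mono hK hab)) hKpos.le
  refine le_of_mul_le_mul_left ?_ hKpos
  rw [mul_DeltaK_succ hK, mul_DeltaK_succ hK]
  linarith

theorem optNetRate_le_succ (hd : 0 < d) (hNcoh : 0 < Ncoh) (hK : 0 < K) {t : ℕ}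
    (h : K * DeltaK C0 d K (t + 1) ≤ Ncoh) :
    optNetRate C0 d Ncoh K t ≤ optNetRate C0 d Ncoh K (t + 1) := by
  have := optNetRate_succ_sub (C0 := C0) hd.ne' hNcoh.ne' hK t
  have : 0 < d / (3 ^ tier K t * Ncoh) := by positivity
  nlinarith

theorem optNetRate_succ_le (hd : 0 < d) (hNcoh : 0 < Ncoh) (hK : 0 < K) {t : ℕ}
    (h : Ncoh ≤ K * DeltaK C0 d K (t + 1)) :
    optNetRate C0 d Ncoh K (t + 1) ≤ optNetRate C0 d Ncoh K t := by
  have := optNetRate_succ_sub (C0 := C0) hd.ne' hNcoh.ne' hK t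
  have : 0 < d / (3 ^ tier K t * Ncoh) := by positivity
  nlinarith

theorem optNetRate_le (hC0 : 0 ≤ C0) (hd : 0 < d) (hK : 0 < K) (hNcoh : 0 < Ncoh) {n M j : ℕ}
    (hlow : 1 ≤ n → DeltaK C0 d K n ≤ Ncoh / K)
    (hhigh : n + 1 ≤ M → Ncoh / K < DeltaK C0 d K (n + 1)) (hj : j ≤ M) :
    optNetRate C0 d Ncoh K j ≤ optNetRate C0 d Ncoh K n := by
  have hKpos : (0 : ℝ) < K := by exact_mod_cast hK
  have hΔ := monotone_DeltaK_succ hC0 hd hK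
  rcases le_total j n with hjn | hnj
  · refine monotoneOn_of_le_succ Set.ordConnected_Iic (fun t _ _ ht => ?_) hjn le_rfl hjn
    rw [Order.succ_eq_add_one, Set.mem_Iic] at *
    refine optNetRate_le_succ hd hNcoh hK ((le_div_iff₀' hKpos).1 ?_)
    calc DeltaK C0 d K (t + 1) ≤ DeltaK C0 d K (n - 1 + 1) := hΔ (by omega)
      _ ≤ Ncoh / K := by rw [Nat.sub_add_cancel (by omega)]; exact hlow (by omega)
  · refine antitoneOn_of_succ_le Set.ordConnected_Icc (fun t _ ht ht' => ?_)
      ⟨le_rfl, hnj.trans hj⟩ ⟨hnj, hj⟩ hnj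
    rw [Order.succ_eq_add_one, Set.mem_Icc] at *
    refine optNetRate_succ_le hd hNcoh hK ((div_le_iff₀' hKpos).1 ?_)
    exact (hhigh (by omega)).le.trans (hΔ ht.1)

theorem Cnet_le_optNetRate {m j : ℕ} {p : Fin m → ℤ} (hd : 0 ≤ d) (hNcoh : 0 < Ncoh)
    (hp : validPK K p) (hj : Npil p = 2 * j + K) (hN : (Npil p : ℝ) ≤ Ncoh) :
    Cnet C0 d p Ncoh ≤ optNetRate C0 d Ncoh K j := by
  have hfac : 0 ≤ 1 - (Npil p : ℝ) / Ncoh := sub_nonneg.2 ((div_le_one hNcoh).2 hN)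
  calc Cnet C0 d p Ncoh ≤ (1 - (Npil p : ℝ) / Ncoh) * twoDepthRate C0 d K (tier K j) (Npil p) :=
        mul_le_mul_of_nonneg_left (Csum_le_twoDepthRate hd hp _) hfac
    _ = optNetRate C0 d Ncoh K j := by rw [optNetRate, hj]; push_cast; rfl

theorem Cnet_le_optNetRate_zero {m : ℕ} {p : Fin m → ℤ} (hC0 : 0 ≤ C0) (hd : 0 ≤ d)
    (hNcoh : 0 < Ncoh) (hK : 0 < K) (hp : validPK K p) (hN : Ncoh < Npil p) :
    Cnet C0 d p Ncoh ≤ optNetRate C0 d Ncoh K 0 := by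
  have hfac : 1 - (Npil p : ℝ) / Ncoh < 0 := sub_neg.2 ((one_lt_div hNcoh).2 hN)
  have hKN : (K : ℝ) / Ncoh ≤ Npil p / Ncoh := by
    gcongr
    exact_mod_cast le_Npil hp
  have htier : tier K 0 = 0 := tier_eq_of_le_of_lt hK le_rfl (by simp [tierSum, hK])
  calc Cnet C0 d p Ncoh ≤ (1 - (Npil p : ℝ) / Ncoh) * (K * C0) :=
        mul_le_mul_of_nonpos_left (mul_le_Csum hd hp) hfac.le
    _ ≤ (1 - (K : ℝ) / Ncoh) * (K * C0) := by gcongr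
    _ = optNetRate C0 d Ncoh K 0 := by simp only [optNetRate, htier, twoDepthRate]; push_cast; ring

end NetRate

end PilotAssignment

open PilotAssignment

/-- Theorem 4: if `Δ^{(K)}_n ≤ N_coh/K < Δ^{(K)}_{n+1}` (with the conventions
`Δ^{(K)}_0 = 0` and `Δ^{(K)}_{N_{K,L}+1} = +∞`, where `N_{K,L} = (K·3^{m-1}-K)/2`),
then `p'_opt(2n+K, K)` maximizes the net rate over all valid pilot assignment
vectors; in particular the optimal pilot length is `2n+K`. -/
theorem theorem4_optimal_pilot_length_multiuser (m : ℕ) (hm : 2 ≤ m)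
    (K : ℕ) (hK : 1 ≤ K) (C0 d : ℝ) (hC0 : 0 < C0) (hd : 0 < d)
    (n : ℕ) (hn : n ≤ (K * 3 ^ (m - 1) - K) / 2)
    (Ncoh : ℝ) (hNcoh : 0 < Ncoh)
    (hlow : 1 ≤ n → DeltaK C0 d K n ≤ Ncoh / K)
    (hhigh : n + 1 ≤ (K * 3 ^ (m - 1) - K) / 2 → Ncoh / K < DeltaK C0 d K (n + 1)) :
    Npil (poptK m K (2 * (n : ℤ) + K)) = 2 * (n : ℤ) + K ∧
    ∀ p : Fin m → ℤ, validPK K p →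
      Cnet C0 d p Ncoh ≤ Cnet C0 d (poptK m K (2 * (n : ℤ) + K)) Ncoh := by
  have hm₀ : 0 < m := by omega
  rw [← tierSum_eq_sub_div] at hn hhigh
  refine ⟨Npil_poptK hK hm₀ hn, fun p hp => ?_⟩
  rw [Cnet_poptK C0 d Ncoh hK hm₀ hn]
  have hpeak {j : ℕ} (hj : j ≤ tierSum K (m - 1)) :=
    optNetRate_le hC0.le hd hK hNcoh hlow hhigh hj
  obtain ⟨j, hj, hjm⟩ := exists_Npil_eq hm₀ hp
  rcases le_or_gt (Npil p : ℝ) Ncoh with hN | hN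
  · exact (Cnet_le_optNetRate hd.le hNcoh hp hj hN).trans (hpeak hjm)
  · exact (Cnet_le_optNetRate_zero hC0.le hd.le hNcoh hK hp hN).trans (hpeak (Nat.zero_le _))
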